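/- arXiv:1902.03461 — 5 statements merged into one kernel-verified Lean document; each statement's English description precedes it below -/
import Mathlib

section
/- For every numerical semigroup S, the conductor satisfies c(S) ≤ (t(S) + 1)·|L(S)|, where t(S) is the type of S and L(S) the set of left elements. -/
/-- The nsConductor of a set of naturals: the least `c` such that every `n ≥ c` lies in `S`. -/
noncomputable def nsConductor (S : Set ℕ) : ℕ := sInf {c | ∀ m, c ≤ m → m ∈ S}

/-- The nsGenus: the number of gaps. -/
noncomputable def nsGenus (S : Set ℕ) : ℕ := Sᶜ.ncard

/-- The left elements: elements of `S` below the nsConductor. -/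
noncomputable def nsLefts (S : Set ℕ) : Set ℕ := {s ∈ S | s < nsConductor S}

/-- The primitive (minimal generator) elements: nonzero elements of `S` that are
not a sum of two nonzero elements of `S`. -/
noncomputable def nsPrims (S : Set ℕ) : Set ℕ :=
  {p ∈ S | p ≠ 0 ∧ ¬∃ a ∈ S, ∃ b ∈ S, a ≠ 0 ∧ b ≠ 0 ∧ a + b = p}

/-- The multiplicity: the least positive element of `S`. -/
noncomputable def nsMult (S : Set ℕ) : ℕ := sInf {s ∈ S | s ≠ 0}

/-- The set of pseudo-Frobenius numbers of `S`. -/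
noncomputable def pseudoFrobenius (S : Set ℕ) : Set ℕ :=
  {x | x ∉ S ∧ ∀ s ∈ S, s ≠ 0 → x + s ∈ S}

theorem stmt_7 (S : Set ℕ) (h0 : 0 ∈ S)
    (hadd : ∀ a ∈ S, ∀ b ∈ S, a + b ∈ S) (hfin : Sᶜ.Finite) :
    nsConductor S ≤ ((pseudoFrobenius S).ncard + 1) * (nsLefts S).ncard := by
  classical
  set c := nsConductor S with hc
  -- the conductor works
  have hcs : ∀ m, c ≤ m → m ∈ S := by
    have hne : {c | ∀ m, c ≤ m → m ∈ S}.Nonempty := by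
      obtain ⟨N, hN⟩ := hfin.bddAbove
      refine ⟨N + 1, fun m hm => ?_⟩
      by_contra h
      exact absurd (hN h) (by omega)
    exact Nat.sInf_mem hne
  -- gaps are below the conductor
  have hgap_lt : ∀ x ∉ S, x < c := by
    intro x hx
    by_contra h
    exact hx (hcs x (by omega))
  -- finiteness
  have hLfin : (nsLefts S).Finite :=
    (Set.finite_Iio c).subset (fun x hx => hx.2)
  -- For each gap x, the set of gaps y ≥ x with y - x ∈ S
  set T : ℕ → Set ℕ := fun x => {y | y ∉ S ∧ x ≤ y ∧ y - x ∈ S} with hT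
  have hTsub : ∀ x, T x ⊆ Sᶜ := fun x y hy => hy.1
  set F : ℕ → ℕ := fun x => sSup (T x) with hF
  have hFmem : ∀ x ∉ S, F x ∈ T x := by
    intro x hx
    exact Nat.sSup_mem ⟨x, hx, le_refl x, by simpa using h0⟩
      ((hfin.subset (hTsub x)).bddAbove)
  have hFmax : ∀ x, ∀ y ∈ T x, y ≤ F x := by
    intro x y hy
    exact le_csSup (hfin.subset (hTsub x)).bddAbove hy
  -- F x is pseudo-Frobenius
  have hFpf : ∀ x ∉ S, F x ∈ pseudoFrobenius S := by
    intro x hx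
    obtain ⟨h1, h2, h3⟩ := hFmem x hx
    refine ⟨h1, fun s hs hs0 => ?_⟩
    by_contra hns
    have : F x + s ∈ T x := ⟨hns, by omega, by
      have : F x + s - x = (F x - x) + s := by omega
      rw [this]; exact hadd _ h3 _ hs⟩
    have := hFmax x _ this
    omega
  -- the map x ↦ (F x, F x - x) injects gaps into PF ×ˢ Lefts
  have hmaps : ∀ x ∈ Sᶜ, (F x, F x - x) ∈ pseudoFrobenius S ×ˢ nsLefts S := by
    intro x hx
    obtain ⟨h1, h2, h3⟩ := hFmem x hx
    exact ⟨hFpf x hx, h3, lt_of_le_of_lt (by omega) (hgap_lt _ h1)⟩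
  have hinj : Set.InjOn (fun x => (F x, F x - x)) Sᶜ := by
    intro a ha b hb hab
    obtain ⟨-, ha2, -⟩ := hFmem a ha
    obtain ⟨-, hb2, -⟩ := hFmem b hb
    simp only [Prod.mk.injEq] at hab
    omega
  have hprodfin : (pseudoFrobenius S ×ˢ nsLefts S).Finite :=
    Set.Finite.prod (hfin.subset fun x hx => hx.1) hLfin
  have hcard1 : Sᶜ.ncard ≤ (pseudoFrobenius S ×ˢ nsLefts S).ncard :=
    Set.ncard_le_ncard_of_injOn _ hmaps hinj hprodfin
  have hcard2 : (pseudoFrobenius S ×ˢ nsLefts S).ncard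
      = (pseudoFrobenius S).ncard * (nsLefts S).ncard := by
    rw [← Nat.card_coe_set_eq, ← Nat.card_coe_set_eq, ← Nat.card_coe_set_eq,
      Nat.card_congr (Equiv.Set.prod _ _), Nat.card_prod]
  -- counting: c = |Lefts| + |gaps|
  have hsplit : Set.Iio c = nsLefts S ∪ Sᶜ := by
    ext x
    constructor
    · intro hx
      by_cases h : x ∈ S
      · exact Or.inl ⟨h, hx⟩
      · exact Or.inr h
    · rintro (⟨-, h⟩ | h)
      · exact h
      · exact hgap_lt x h
  have hdisj : Disjoint (nsLefts S) Sᶜ :=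
    Set.disjoint_left.mpr fun x hx hx' => hx' hx.1
  have hcount : c = (nsLefts S).ncard + Sᶜ.ncard := by
    have : (Set.Iio c).ncard = (nsLefts S).ncard + Sᶜ.ncard := by
      rw [hsplit, Set.ncard_union_eq hdisj hLfin hfin]
    rw [← this]
    have : (Set.Iio c) = ((Finset.Iio c : Finset ℕ) : Set ℕ) := by simp
    rw [this, Set.ncard_coe_finset, Nat.card_Iio]
  rw [hcount]
  have hle : Sᶜ.ncard ≤ (pseudoFrobenius S).ncard * (nsLefts S).ncard := hcard2 ▸ hcard1
  nlinarith [hle]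
end

section
/- For a numerical semigroup S and a ∈ S with a > 0, the dilation D(S,a) satisfies m(D(S,a)) = m(S) + a and c(D(S,a)) = c(S) + a. -/
/-- The dilation of `S` with respect to `a`. -/
noncomputable def dilation (S : Set ℕ) (a : ℕ) : Set ℕ := {0} ∪ {n | ∃ s ∈ S, s ≠ 0 ∧ n = s + a}

theorem stmt_11 (S : Set ℕ) (h0 : 0 ∈ S)
    (hadd : ∀ a ∈ S, ∀ b ∈ S, a + b ∈ S) (hfin : Sᶜ.Finite)
    (hS : S ≠ Set.univ) (a : ℕ) (ha : a ∈ S) (hapos : 0 < a) :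
    nsMult (dilation S a) = nsMult S + a ∧ nsConductor (dilation S a) = nsConductor S + a := by
  have hane : a ∈ {s ∈ S | s ≠ 0} := ⟨ha, hapos.ne'⟩
  have hmmem : nsMult S ∈ {s ∈ S | s ≠ 0} := Nat.sInf_mem ⟨a, hane⟩
  -- conductor set of S is nonempty
  have hbdd : BddAbove Sᶜ := hfin.bddAbove
  obtain ⟨N, hN⟩ := hbdd
  have hNne : (N + 1) ∈ {c | ∀ m, c ≤ m → m ∈ S} := by
    intro m hm
    by_contra hmS
    exact absurd (hN hmS) (by omega)
  have hcmem : nsConductor S ∈ {c | ∀ m, c ≤ m → m ∈ S} := Nat.sInf_mem ⟨_, hNne⟩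
  have hcpos : 0 < nsConductor S := by
    rcases Nat.eq_zero_or_pos (nsConductor S) with h | h
    · exfalso
      apply hS
      ext x
      simp only [Set.mem_univ, iff_true]
      exact hcmem x (h ▸ Nat.zero_le x)
    · exact h
  have hcgap : nsConductor S - 1 ∉ S := by
    intro hmem
    have : nsConductor S ≤ nsConductor S - 1 := by
      apply Nat.sInf_le
      intro m hm
      rcases Nat.eq_or_lt_of_le hm with h | h
      · exact h ▸ hmem
      · exact hcmem m (by omega)
    omega
  constructor
  · apply le_antisymm
    · apply Nat.sInf_le
      refine ⟨Or.inr ⟨nsMult S, hmmem.1, hmmem.2, rfl⟩, by omega⟩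
    · apply le_csInf
      · exact ⟨nsMult S + a, Or.inr ⟨nsMult S, hmmem.1, hmmem.2, rfl⟩, by omega⟩
      · rintro x ⟨hx, hxne⟩
        rcases hx with hx | ⟨s, hs, hsne, rfl⟩
        · exact absurd hx hxne
        · have : nsMult S ≤ s := Nat.sInf_le ⟨hs, hsne⟩
          omega
  · apply le_antisymm
    · apply Nat.sInf_le
      intro m hm
      right
      refine ⟨m - a, hcmem (m - a) (by omega), by omega, by omega⟩
    · apply le_csInf
      · exact ⟨nsConductor S + a, fun m hm =>
          Or.inr ⟨m - a, hcmem (m - a) (by omega), by omega, by omega⟩⟩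
      · intro c' hc'
        by_contra hlt
        push_neg at hlt
        have : nsConductor S - 1 + a ∈ dilation S a := hc' _ (by omega)
        rcases this with h | ⟨s, hs, hsne, heq⟩
        · simp only [Set.mem_singleton_iff] at h; omega
        · have : s = nsConductor S - 1 := by omega
          exact hcgap (this ▸ hs)
end

section
/- Let m be a positive integer and Y = {m, m+1, m+2, m+3} ∪ {7k + m : 0 ≤ k ≤ ⌊m/7⌋}. Then Y + Y + Y contains all integers n with 3m ≤ n ≤ 3m + ⌊m/7⌋ + 3. -/
theorem stmt_13 (m : ℕ) (hm : 0 < m) (Y : Set ℕ)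
    (hY : Y = {m, m + 1, m + 2, m + 3} ∪ {n | ∃ k : ℕ, k ≤ m / 7 ∧ n = 7 * k + m}) :
    ∀ n : ℕ, 3 * m ≤ n → n ≤ 3 * m + m / 7 + 3 →
      ∃ x ∈ Y, ∃ y ∈ Y, ∃ z ∈ Y, n = x + y + z := by
  subst hY
  intro n h1 h2
  have key : ∀ a ≤ 3, m + a ∈ ({m, m + 1, m + 2, m + 3} : Set ℕ) ∪
      {n | ∃ k : ℕ, k ≤ m / 7 ∧ n = 7 * k + m} := by
    intro a ha
    left
    interval_cases a <;> simp
  set r := n - 3 * m with hrdef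
  refine ⟨7 * (r / 7) + m, Or.inr ⟨r / 7, by omega, rfl⟩,
    m + min (r % 7) 3, key _ (by omega),
    m + (r % 7 - min (r % 7) 3), key _ (by omega), by omega⟩
end

section
/- Every numerical semigroup of maximal embedding dimension satisfies Wilf's conjecture: |P(S)|·|L(S)| ≥ c(S). -/
theorem stmt_16 (S : Set ℕ) (h0 : 0 ∈ S)
    (hadd : ∀ a ∈ S, ∀ b ∈ S, a + b ∈ S) (hfin : Sᶜ.Finite)
    (hmed : (nsPrims S).ncard = nsMult S) :
    nsConductor S ≤ (nsPrims S).ncard * (nsLefts S).ncard := by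
  set c := nsConductor S with hc
  set m := nsMult S with hmdef
  -- S is infinite, so it has a nonzero element
  have hSinf : S.Infinite := by
    have := hfin.infinite_compl
    simpa using this
  have hne : {s ∈ S | s ≠ 0}.Nonempty := by
    obtain ⟨s, hs⟩ := (hSinf.diff (Set.finite_singleton 0)).nonempty
    exact ⟨s, hs.1, by simpa using hs.2⟩
  have hmmem : m ∈ S ∧ m ≠ 0 := Nat.sInf_mem hne
  rcases Nat.eq_zero_or_pos c with hc0 | hcpos
  · rw [hc0]; exact Nat.zero_le _
  -- multiples of m are in S
  have hmul : ∀ k : ℕ, k * m ∈ S := by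
    intro k
    induction k with
    | zero => simpa using h0
    | succ n ih =>
      have := hadd _ ih _ hmmem.1
      simpa [Nat.succ_mul] using this
  set q := (c - 1) / m + 1 with hq
  -- c ≤ m * q
  have hmq : c ≤ m * q := by
    have h1 := Nat.div_add_mod (c - 1) m
    have h2 := Nat.mod_lt (c - 1) (Nat.pos_of_ne_zero hmmem.2)
    rw [hq, Nat.mul_add, Nat.mul_one]
    omega
  -- the finset of multiples of m below c
  have hsub : ↑((Finset.range q).image (· * m)) ⊆ nsLefts S := by
    intro x hx
    simp only [Finset.coe_image, Finset.coe_range, Set.mem_image, Set.mem_Iio] at hx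
    obtain ⟨k, hk, rfl⟩ := hx
    refine ⟨hmul k, ?_⟩
    have hk' : k ≤ (c - 1) / m := by omega
    have : k * m ≤ (c - 1) / m * m := Nat.mul_le_mul_right _ hk'
    have h3 : (c - 1) / m * m ≤ c - 1 := Nat.div_mul_le_self _ _
    omega
  have hLfin : (nsLefts S).Finite := (Set.finite_Iio c).subset (fun x hx => hx.2)
  have hcard : q ≤ (nsLefts S).ncard := by
    have h4 : ((Finset.range q).image (· * m)).card = q := by
      rw [Finset.card_image_of_injective _ (fun a b hab => by
        exact Nat.eq_of_mul_eq_mul_right (Nat.pos_of_ne_zero hmmem.2) hab)]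
      simp
    calc q = (↑((Finset.range q).image (· * m)) : Set ℕ).ncard := by
            rw [Set.ncard_coe_finset, h4]
      _ ≤ (nsLefts S).ncard := Set.ncard_le_ncard hsub hLfin
  calc c ≤ m * q := hmq
    _ ≤ m * (nsLefts S).ncard := Nat.mul_le_mul_left _ hcard
    _ = (nsPrims S).ncard * (nsLefts S).ncard := by rw [hmed]
end

section
/- If a numerical semigroup S satisfies c(S) ≤ 2·m(S), then S satisfies Wilf's conjecture: |P(S)|·|L(S)| ≥ c(S). -/
theorem stmt_17 (S : Set ℕ) (h0 : 0 ∈ S)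
    (hadd : ∀ a ∈ S, ∀ b ∈ S, a + b ∈ S) (hfin : Sᶜ.Finite)
    (hc : nsConductor S ≤ 2 * nsMult S) :
    nsConductor S ≤ (nsPrims S).ncard * (nsLefts S).ncard := by
  classical
  set c := nsConductor S with hcdef
  set m := nsMult S with hmdef
  -- conductor property
  have hcS : ∀ n, c ≤ n → n ∈ S := by
    have hne : {c | ∀ n, c ≤ n → n ∈ S}.Nonempty := by
      obtain ⟨N, hN⟩ := hfin.bddAbove
      refine ⟨N + 1, fun n hn => ?_⟩
      by_contra h
      exact absurd (hN h) (by omega)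
    exact Nat.sInf_mem hne
  -- multiplicity property
  have hmne : {s ∈ S | s ≠ 0}.Nonempty := ⟨c + 1, hcS _ (by omega), by omega⟩
  have hmS : m ∈ S ∧ m ≠ 0 := Nat.sInf_mem hmne
  have hmle : ∀ s ∈ S, s ≠ 0 → m ≤ s := fun s hs h0s => Nat.sInf_le ⟨hs, h0s⟩
  have hm1 : 1 ≤ m := Nat.one_le_iff_ne_zero.mpr hmS.2
  rcases Nat.eq_zero_or_pos c with hc0 | hc1
  · simp [hc0]
  -- the left elements other than 0, as a finset
  set L' : Finset ℕ := (Finset.Ico m c).filter (· ∈ S) with hL'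
  set k := L'.card with hk
  have hmemL' : ∀ n, n ∈ L' ↔ (m ≤ n ∧ n < c ∧ n ∈ S) := by
    intro n; simp [hL', Finset.mem_filter, Finset.mem_Ico]; tauto
  -- counting the left elements
  have hlefts : (nsLefts S).ncard = k + 1 := by
    have hset : nsLefts S = ↑(insert 0 L') := by
      ext n
      simp only [nsLefts, Set.mem_setOf_eq, Finset.coe_insert, Set.mem_insert_iff,
        Finset.mem_coe, hmemL', ← hcdef]
      constructor
      · rintro ⟨hnS, hnc⟩
        rcases Nat.eq_zero_or_pos n with h | h
        · exact Or.inl h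
        · exact Or.inr ⟨hmle n hnS (by omega), hnc, hnS⟩
      · rintro (rfl | ⟨_, hnc, hnS⟩)
        · exact ⟨h0, hc1⟩
        · exact ⟨hnS, hnc⟩
    rw [hset, Set.ncard_coe_finset, Finset.card_insert_of_notMem (by
      simp [hmemL']; omega)]
  -- nonzero left elements are primitive
  have hL'prim : ∀ n ∈ L', n ∈ nsPrims S := by
    intro n hn
    rw [hmemL'] at hn
    obtain ⟨hmn, hnc, hnS⟩ := hn
    refine ⟨hnS, by omega, ?_⟩
    rintro ⟨a, ha, b, hb, ha0, hb0, hab⟩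
    have := hmle a ha ha0
    have := hmle b hb hb0
    omega
  -- decomposability
  set dec : ℕ → Prop := fun n => ∃ a ∈ S, ∃ b ∈ S, a ≠ 0 ∧ b ≠ 0 ∧ a + b = n with hdec
  set PB : Finset ℕ := (Finset.Ico c (c + m)).filter (fun n => ¬ dec n) with hPB
  set D : Finset ℕ := (Finset.Ico c (c + m)).filter (fun n => dec n) with hD
  have hPBD : D.card + PB.card = m := by
    have h := Finset.card_filter_add_card_filter_not
      (s := Finset.Ico c (c + m)) (p := dec)
    rw [Nat.card_Ico, Nat.add_sub_cancel_left] at h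
    rw [hD, hPB]
    exact h
  -- elements of PB are primitive
  have hPBprim : ∀ n ∈ PB, n ∈ nsPrims S := by
    intro n hn
    rw [hPB, Finset.mem_filter, Finset.mem_Ico] at hn
    refine ⟨hcS n hn.1.1, by omega, by rw [hdec] at hn; exact hn.2⟩
  -- primitives are finite
  have hprimfin : (nsPrims S).Finite := by
    refine Set.Finite.subset (Set.finite_Iio (c + m)) ?_
    intro n hn
    simp only [Set.mem_Iio]
    by_contra h
    push_neg at h
    exact hn.2.2 ⟨m, hmS.1, n - m, hcS _ (by omega), hmS.2, by omega, by omega⟩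
  have hdisj : Disjoint L' PB := by
    rw [Finset.disjoint_left]
    intro a ha hb
    rw [hmemL'] at ha
    rw [hPB, Finset.mem_filter, Finset.mem_Ico] at hb
    omega
  -- counting primitives
  have hprimcard : k + PB.card ≤ (nsPrims S).ncard := by
    have hsub : ↑(L' ∪ PB) ⊆ nsPrims S := by
      intro n hn
      rcases Finset.mem_union.mp hn with h | h
      · exact hL'prim n h
      · exact hPBprim n h
    calc k + PB.card = (L' ∪ PB).card := by rw [Finset.card_union_of_disjoint hdisj, hk]
    _ = (↑(L' ∪ PB) : Set ℕ).ncard := (Set.ncard_coe_finset _).symm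
    _ ≤ (nsPrims S).ncard := Set.ncard_le_ncard hsub hprimfin
  -- the decomposable elements of [c, c+m) are sums of two nonzero left elements
  have hDcard : 2 * D.card ≤ k * (k + 1) := by
    have hsub : D ⊆ L'.sym2.image (Sym2.lift ⟨fun a b => a + b, fun a b => Nat.add_comm a b⟩) := by
      intro n hn
      rw [hD, Finset.mem_filter, Finset.mem_Ico] at hn
      obtain ⟨⟨hcn, hncm⟩, hdn⟩ := hn
      rw [hdec] at hdn
      obtain ⟨a, ha, b, hb, ha0, hb0, hab⟩ := hdn
      have hma := hmle a ha ha0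
      have hmb := hmle b hb hb0
      have haL : a ∈ L' := by rw [hmemL']; exact ⟨hma, by omega, ha⟩
      have hbL : b ∈ L' := by rw [hmemL']; exact ⟨hmb, by omega, hb⟩
      refine Finset.mem_image.mpr ⟨s(a, b), ?_, ?_⟩
      · exact Finset.mk_mem_sym2_iff.mpr ⟨haL, hbL⟩
      · simpa using hab
    have h1 : D.card ≤ L'.sym2.card :=
      le_trans (Finset.card_le_card hsub) (Finset.card_image_le)
    rw [Finset.card_sym2, ← hk] at h1
    have h2 : (k + 1).choose 2 * 2 = k * (k + 1) := by
      rw [Nat.choose_two_right]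
      simp only [Nat.add_sub_cancel]
      rw [Nat.mul_comm (k + 1) k]
      exact Nat.div_mul_cancel (Nat.even_mul_succ_self k).two_dvd
    omega
  -- if there are no nonzero left elements, c ≤ m
  have hk0 : k = 0 → c ≤ m := by
    intro hkk
    by_contra h
    have : m ∈ L' := by rw [hmemL']; exact ⟨le_refl m, by omega, hmS.1⟩
    have := Finset.card_pos.mpr ⟨m, this⟩
    omega
  -- final arithmetic
  rw [hlefts]
  set p := (nsPrims S).ncard
  rcases Nat.eq_zero_or_pos k with hkk | hkk
  · have hd0 : D.card = 0 := by
      rw [hkk] at hDcard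
      simpa using hDcard
    calc c ≤ m := hk0 hkk
    _ = k + PB.card := by omega
    _ ≤ p := hprimcard
    _ ≤ p * (k + 1) := Nat.le_mul_of_pos_right _ (by omega)
  · have h1 : (k + PB.card) * (k + 1) ≤ p * (k + 1) :=
      Nat.mul_le_mul_right _ hprimcard
    refine le_trans ?_ h1
    nlinarith [hPBD, hDcard, hc, hkk]
end
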